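/- Let ψ be a nonnegative measurable function on ℝ^d with ∫ ψ(ξ)⟨ξ⟩³ dξ < ∞, ∫ ψ dξ = 1, ∫ ξ ψ(ξ) dξ = 0 and ∫ |ξ|² ψ(ξ) dξ = d/2. Then: √(2d) ≥ a_ψ ≥ (d²/4) M_{3/2}(ψ)^{−1}; √(d/2) ≥ M_{1/2}(ψ) ≥ (d²/4) M_{3/2}(ψ)^{−1}; (2/d) M_{3/2}(ψ) + √(d/2) ≥ b_ψ ≥ √(d/2); M_{3/2}(ψ) ≥ (d/2)^{3/2}; and a_ψ ≤ √d ≤ √2 · b_ψ. -/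

import Mathlib

open MeasureTheory Metric Real ENNReal

noncomputable section

/-- `ℝ^d` as a Euclidean space. -/
abbrev V (d : ℕ) := EuclideanSpace ℝ (Fin d)

/-- Japanese bracket `⟨v⟩ = √(1+|v|²)`. -/
def jap {d : ℕ} (v : V d) : ℝ := Real.sqrt (1 + ‖v‖ ^ 2)

/-- Surface measure on the unit sphere `S^{d-1} ⊆ ℝ^d`. -/
def sphereMeasure (d : ℕ) : Measure (sphere (0 : V d) 1) :=
  (volume : Measure (V d)).toSphere

/-- `|S^{d-1}|`, the total surface area of the unit sphere. -/
def sphereArea (d : ℕ) : ℝ := (sphereMeasure d Set.univ).toReal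

/-- Gain part `Q⁺(g,f)` of the hard-spheres collision operator:
`Q⁺(g,f)(v) = |S^{d-1}|⁻¹ ∫∫ |v-v₊| g(v') f(v'₊) dσ dv₊`. -/
def Qplus {d : ℕ} (g f : V d → ℝ) (v : V d) : ℝ :=
  (sphereArea d)⁻¹ *
    ∫ w : V d, ∫ σ : sphere (0 : V d) 1,
      ‖v - w‖ * g ((1 / 2 : ℝ) • (v + w) + (‖v - w‖ / 2) • (σ : V d)) *
        f ((1 / 2 : ℝ) • (v + w) - (‖v - w‖ / 2) • (σ : V d)) ∂(sphereMeasure d)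

/-- Loss part `Q⁻(g,f)(v) = g(v) ∫ |v-w| f(w) dw`. -/
def Qminus {d : ℕ} (g f : V d → ℝ) (v : V d) : ℝ :=
  g v * ∫ w : V d, ‖v - w‖ * f w

/-- The annihilation operator `𝔹_α(f,f) = (1-α) Q⁺(f,f) - Q⁻(f,f)`. -/
def Bop {d : ℕ} (α : ℝ) (f : V d → ℝ) (v : V d) : ℝ :=
  (1 - α) * Qplus f f v - Qminus f f v

/-- Drift coefficient `A_ψ = -(α/2) ∫ (d+2-2|ξ|²) Q⁻(ψ,ψ)(ξ) dξ`. -/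
def Acoef {d : ℕ} (α : ℝ) (ψ : V d → ℝ) : ℝ :=
  -(α / 2) * ∫ ξ : V d, ((d : ℝ) + 2 - 2 * ‖ξ‖ ^ 2) * Qminus ψ ψ ξ

/-- Drift coefficient `B_ψ = -(α/(2d)) ∫ (d-2|ξ|²) Q⁻(ψ,ψ)(ξ) dξ`. -/
def Bcoef {d : ℕ} (α : ℝ) (ψ : V d → ℝ) : ℝ :=
  -(α / (2 * d)) * ∫ ξ : V d, ((d : ℝ) - 2 * ‖ξ‖ ^ 2) * Qminus ψ ψ ξ

/-- `ψ ∈ ℰ_α`: `ψ` is a nonnegative `C^∞` function with `∫ ψ ⟨ξ⟩³ dξ < ∞` and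
`∫ ψ² dξ < ∞`, of unit mass, zero momentum and energy `d/2`, solving the steady
self-similar profile equation `A_ψ ψ + B_ψ ξ·∇ψ = 𝔹_α(ψ,ψ)`. -/
def memE {d : ℕ} (α : ℝ) (ψ : V d → ℝ) : Prop :=
  (∀ ξ, 0 ≤ ψ ξ) ∧ (∀ n : ℕ, ContDiff ℝ n ψ) ∧
    Integrable (fun ξ : V d => ψ ξ * jap ξ ^ 3) ∧
    Integrable (fun ξ : V d => ψ ξ ^ 2) ∧
    (∫ ξ : V d, ψ ξ) = 1 ∧
    (∫ ξ : V d, ψ ξ • ξ) = 0 ∧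
    (∫ ξ : V d, ψ ξ * ‖ξ‖ ^ 2) = (d : ℝ) / 2 ∧
    ∀ ξ : V d,
      Acoef α ψ * ψ ξ + Bcoef α ψ * (inner ℝ ξ (gradient ψ ξ) : ℝ) = Bop α ψ ξ

/-- Moment of order `2k`: `M_k(ψ) = ∫ ψ(ξ) |ξ|^{2k} dξ`. -/
def Mmom {d : ℕ} (k : ℝ) (ψ : V d → ℝ) : ℝ := ∫ ξ : V d, ψ ξ * ‖ξ‖ ^ (2 * k)

/-- Weighted `L¹` norm `‖f‖_{L¹_η} = ∫ |f(ξ)| ⟨ξ⟩^η dξ`. -/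
def L1w {d : ℕ} (η : ℝ) (f : V d → ℝ) : ℝ := ∫ ξ : V d, |f ξ| * jap ξ ^ η

/-- Weighted `L¹` norm with values in `ℝ≥0∞`. -/
def L1wE {d : ℕ} (η : ℝ) (f : V d → ℝ) : ℝ≥0∞ :=
  ∫⁻ ξ : V d, ENNReal.ofReal (|f ξ| * jap ξ ^ η)

/-- Weighted `L²` norm `‖f‖_{L²_k} = (∫ |f(ξ)|² ⟨ξ⟩^{2k} dξ)^{1/2}` (values in `ℝ≥0∞`). -/
def L2wE {d : ℕ} (k : ℝ) (f : V d → ℝ) : ℝ≥0∞ :=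
  (∫⁻ ξ : V d, ENNReal.ofReal (f ξ ^ 2 * jap ξ ^ (2 * k))) ^ (1 / 2 : ℝ)

/-- Partial derivative in the `i`-th coordinate direction. -/
def pderiv' {d : ℕ} (i : Fin d) (f : V d → ℝ) : V d → ℝ :=
  fun x => fderiv ℝ f x (EuclideanSpace.single i 1)

/-- Iterated partial derivative `∂^ℓ` associated with a multi-index `ℓ ∈ ℕ^d`. -/
def multiDeriv {d : ℕ} (ℓ : Fin d → ℕ) (f : V d → ℝ) : V d → ℝ :=
  (List.finRange d).foldr (fun i g => (pderiv' i)^[ℓ i] g) f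

/-- Weighted Sobolev norm `‖f‖_{H^m_k}` (values in `ℝ≥0∞`): square root of the sum of the
squared weighted `L²_k` norms of all partial derivatives `∂^ℓ f` over multi-indices `|ℓ| ≤ m`
(multi-indices with `|ℓ| ≤ m` are encoded as functions `Fin d → Fin (m+1)`). -/
def sobNormE {d : ℕ} (m : ℕ) (k : ℝ) (f : V d → ℝ) : ℝ≥0∞ :=
  (∑ ℓ : Fin d → Fin (m + 1),
      if (∑ i, (ℓ i : ℕ)) ≤ m then L2wE k (multiDeriv (fun i => (ℓ i : ℕ)) f) ^ 2 else 0) ^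
    (1 / 2 : ℝ)

/-- The Maxwellian `ℳ(ξ) = π^{-d/2} exp(-|ξ|²)`. -/
def Maxw {d : ℕ} (ξ : V d) : ℝ := Real.pi ^ (-(d : ℝ) / 2) * Real.exp (-‖ξ‖ ^ 2)

end

/-- `a_ψ = ∫ Q⁻(ψ,ψ)(ξ) dξ`. -/
noncomputable def aCoef {d : ℕ} (ψ : V d → ℝ) : ℝ := ∫ ξ : V d, Qminus ψ ψ ξ

/-- `b_ψ = (2/d) ∫ |ξ|² Q⁻(ψ,ψ)(ξ) dξ`. -/
noncomputable def bCoef {d : ℕ} (ψ : V d → ℝ) : ℝ :=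
  (2 / d) * ∫ ξ : V d, ‖ξ‖ ^ 2 * Qminus ψ ψ ξ

/-!
Write `I(ξ) = ∫ |ξ - w| ψ(w) dw`, so that `Q⁻(ψ,ψ) = ψ I`. Unit mass and zero momentum give
`|ξ| = |∫ (ξ - w) ψ(w) dw| ≤ I(ξ)`, the triangle inequality gives `I(ξ) ≤ |ξ| + M_{1/2}`, and
Cauchy–Schwarz with `∫ |ξ - w|² ψ(w) dw = |ξ|² + d/2` gives `I(ξ)² ≤ |ξ|² + d/2`. Integrating
against `ψ` and `|ξ|² ψ` bounds `a_ψ` and `b_ψ` by moments. Cauchy–Schwarz once more gives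
`M_{1/2} ≤ √(d/2)` and `(d/2)² = M_1² ≤ M_{1/2} M_{3/2}`, whence the lower bounds on the moments.
-/

open scoped RealInnerProductSpace

theorem integral_le_sqrt_mul_sqrt_of_sq_le {α : Type*} [MeasurableSpace α] {μ : Measure α}
    {f g F : α → ℝ} (hf0 : 0 ≤ f) (hg0 : 0 ≤ g) (hf : Integrable f μ) (hg : Integrable g μ)
    (hF : ∀ x, F x ^ 2 ≤ f x * g x) :
    ∫ x, F x ∂μ ≤ √(∫ x, f x ∂μ) * √(∫ x, g x ∂μ) := by
  have memLp_sqrt : ∀ {h : α → ℝ}, 0 ≤ h → Integrable h μ → MemLp (fun x => √(h x)) 2 μ :=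
    fun {h} h0 hi => by
      rw [memLp_two_iff_integrable_sq
        (continuous_sqrt.comp_aestronglyMeasurable hi.aestronglyMeasurable)]
      simpa only [sq_sqrt (h0 _)] using hi
  have holder := integral_mul_le_Lp_mul_Lq_of_nonneg HolderConjugate.two_two
    (ae_of_all _ fun x => sqrt_nonneg (f x)) (ae_of_all _ fun x => sqrt_nonneg (g x))
    (by simpa using memLp_sqrt hf0 hf) (by simpa using memLp_sqrt hg0 hg)
  simp only [Real.rpow_two, fun x => sq_sqrt (hf0 x), fun x => sq_sqrt (hg0 x),
    ← sqrt_eq_rpow] at holder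
  by_cases hFi : Integrable F μ
  · refine (integral_mono hFi ((memLp_sqrt hf0 hf).integrable_mul (memLp_sqrt hg0 hg))
      fun x => ?_).trans holder
    show F x ≤ √(f x) * √(g x)
    rw [← sqrt_mul (hf0 x)]
    exact (le_abs_self _).trans (abs_le_sqrt (hF x))
  · rw [integral_undef hFi]
    positivity

theorem rpow_three_halves (x : ℝ) (hx : 0 ≤ x) : x ^ ((3 : ℝ) / 2) = x * √x := by
  rw [sqrt_eq_rpow, ← rpow_one_add' hx (by norm_num)]
  norm_num

section CollisionFrequency

variable {E : Type*} [NormedAddCommGroup E]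

theorem norm_sub_mul_le_add {ψ : E → ℝ} (hψ0 : 0 ≤ ψ) (ξ w : E) :
    ‖ξ - w‖ * ψ w ≤ ‖ξ‖ * ψ w + ψ w * ‖w‖ :=
  calc ‖ξ - w‖ * ψ w ≤ (‖ξ‖ + ‖w‖) * ψ w := mul_le_mul_of_nonneg_right (norm_sub_le ξ w) (hψ0 w)
    _ = ‖ξ‖ * ψ w + ψ w * ‖w‖ := by ring

theorem mul_norm_sub_sq_eq [InnerProductSpace ℝ E] (ψ : E → ℝ) (ξ w : E) :
    ψ w * ‖ξ - w‖ ^ 2 = ‖ξ‖ ^ 2 * ψ w + ψ w * ‖w‖ ^ 2 - 2 * ⟪ξ, ψ w • w⟫ := by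
  rw [norm_sub_sq_real, real_inner_smul_right]
  ring

variable [MeasurableSpace E] {μ : Measure E} {ψ : E → ℝ}

noncomputable def collisionFreq (μ : Measure E) (ψ : E → ℝ) (ξ : E) : ℝ :=
  ∫ w, ‖ξ - w‖ * ψ w ∂μ

theorem collisionFreq_nonneg (hψ0 : 0 ≤ ψ) (ξ : E) : 0 ≤ collisionFreq μ ψ ξ :=
  integral_nonneg fun w => mul_nonneg (norm_nonneg _) (hψ0 w)

variable [BorelSpace E]

theorem integrable_norm_sub_mul (hψ0 : 0 ≤ ψ) (hψ : Integrable ψ μ)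
    (hψ1 : Integrable (fun w => ψ w * ‖w‖) μ) (ξ : E) :
    Integrable (fun w => ‖ξ - w‖ * ψ w) μ :=
  ((hψ.const_mul ‖ξ‖).add hψ1).mono'
    ((continuous_const.sub continuous_id).norm.aestronglyMeasurable.mul hψ.aestronglyMeasurable)
    (ae_of_all _ fun w => by
      rw [Real.norm_of_nonneg (mul_nonneg (norm_nonneg _) (hψ0 w))]
      exact norm_sub_mul_le_add hψ0 ξ w)

theorem collisionFreq_le (hψ0 : 0 ≤ ψ) (hψ : Integrable ψ μ)
    (hψ1 : Integrable (fun w => ψ w * ‖w‖) μ) (ξ : E) :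
    collisionFreq μ ψ ξ ≤ ‖ξ‖ * ∫ w, ψ w ∂μ + ∫ w, ψ w * ‖w‖ ∂μ := by
  rw [← integral_const_mul, ← integral_add (hψ.const_mul _) hψ1]
  exact integral_mono (integrable_norm_sub_mul hψ0 hψ hψ1 ξ) ((hψ.const_mul _).add hψ1)
    (norm_sub_mul_le_add hψ0 ξ)

theorem norm_pow_mul_mul_collisionFreq_le (hψ0 : 0 ≤ ψ) (hψ : Integrable ψ μ)
    (hψ1 : Integrable (fun w => ψ w * ‖w‖) μ) (k : ℕ) (ξ : E) :
    ‖ξ‖ ^ k * (ψ ξ * collisionFreq μ ψ ξ) ≤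
      (∫ w, ψ w ∂μ) * (ψ ξ * ‖ξ‖ ^ (k + 1)) + (∫ w, ψ w * ‖w‖ ∂μ) * (ψ ξ * ‖ξ‖ ^ k) :=
  calc ‖ξ‖ ^ k * (ψ ξ * collisionFreq μ ψ ξ)
      ≤ ‖ξ‖ ^ k * (ψ ξ * (‖ξ‖ * ∫ w, ψ w ∂μ + ∫ w, ψ w * ‖w‖ ∂μ)) := by
        gcongr
        · exact hψ0 ξ
        · exact collisionFreq_le hψ0 hψ hψ1 ξ
    _ = _ := by ring

variable [SecondCountableTopology E]

theorem stronglyMeasurable_collisionFreq [SFinite μ] (hψ : Measurable ψ) :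
    StronglyMeasurable (collisionFreq μ ψ) :=
  ((measurable_fst.sub measurable_snd).norm.mul (hψ.comp measurable_snd)).stronglyMeasurable
    |>.integral_prod_right'

theorem integrable_norm_pow_mul_collisionFreq [SFinite μ] (hψ0 : 0 ≤ ψ) (hψm : Measurable ψ)
    (hψ : Integrable ψ μ) (hψ1 : Integrable (fun w => ψ w * ‖w‖) μ) {k : ℕ}
    (hk : Integrable (fun ξ => ψ ξ * ‖ξ‖ ^ k) μ)
    (hk1 : Integrable (fun ξ => ψ ξ * ‖ξ‖ ^ (k + 1)) μ) :
    Integrable (fun ξ => ‖ξ‖ ^ k * (ψ ξ * collisionFreq μ ψ ξ)) μ :=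
  ((hk1.const_mul _).add (hk.const_mul _)).mono'
    ((continuous_norm.pow k).aestronglyMeasurable.mul
      (hψm.aestronglyMeasurable.mul (stronglyMeasurable_collisionFreq hψm).aestronglyMeasurable))
    (ae_of_all _ fun ξ => by
      rw [Real.norm_of_nonneg (mul_nonneg (by positivity)
        (mul_nonneg (hψ0 ξ) (collisionFreq_nonneg hψ0 ξ)))]
      exact norm_pow_mul_mul_collisionFreq_le hψ0 hψ hψ1 k ξ)

theorem integral_norm_pow_mul_collisionFreq_le [SFinite μ] (hψ0 : 0 ≤ ψ) (hψm : Measurable ψ)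
    (hψ : Integrable ψ μ) (hψ1 : Integrable (fun w => ψ w * ‖w‖) μ) {k : ℕ}
    (hk : Integrable (fun ξ => ψ ξ * ‖ξ‖ ^ k) μ)
    (hk1 : Integrable (fun ξ => ψ ξ * ‖ξ‖ ^ (k + 1)) μ) :
    ∫ ξ, ‖ξ‖ ^ k * (ψ ξ * collisionFreq μ ψ ξ) ∂μ ≤
      (∫ w, ψ w ∂μ) * (∫ ξ, ψ ξ * ‖ξ‖ ^ (k + 1) ∂μ) +
        (∫ w, ψ w * ‖w‖ ∂μ) * ∫ ξ, ψ ξ * ‖ξ‖ ^ k ∂μ := by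
  rw [← integral_const_mul, ← integral_const_mul,
    ← integral_add (hk1.const_mul _) (hk.const_mul _)]
  exact integral_mono (integrable_norm_pow_mul_collisionFreq hψ0 hψm hψ hψ1 hk hk1)
    ((hk1.const_mul _).add (hk.const_mul _)) (norm_pow_mul_mul_collisionFreq_le hψ0 hψ hψ1 k)

section NormedSpace

variable [NormedSpace ℝ E]

theorem integrable_smul_self (hψ : AEStronglyMeasurable ψ μ)
    (hψ1 : Integrable (fun w => ψ w * ‖w‖) μ) : Integrable (fun w => ψ w • w) μ :=
  hψ1.congr' (hψ.smul aestronglyMeasurable_id) (ae_of_all _ fun w => by simp [norm_smul])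

variable [CompleteSpace E]

theorem norm_le_collisionFreq (hψ0 : 0 ≤ ψ) (hψ : Integrable ψ μ)
    (hψ1 : Integrable (fun w => ψ w * ‖w‖) μ) (hmass : ∫ w, ψ w ∂μ = 1)
    (hmom : ∫ w, ψ w • w ∂μ = 0) (ξ : E) : ‖ξ‖ ≤ collisionFreq μ ψ ξ := by
  have hξ : ∫ w, ψ w • (ξ - w) ∂μ = ξ := by
    simp_rw [smul_sub]
    rw [integral_sub (hψ.smul_const ξ) (integrable_smul_self hψ.aestronglyMeasurable hψ1),
      integral_smul_const, hmass, hmom, one_smul, sub_zero]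
  calc ‖ξ‖ = ‖∫ w, ψ w • (ξ - w) ∂μ‖ := by rw [hξ]
    _ ≤ ∫ w, ‖ψ w • (ξ - w)‖ ∂μ := norm_integral_le_integral_norm _
    _ = collisionFreq μ ψ ξ := by
      simp only [norm_smul, Real.norm_of_nonneg (hψ0 _), mul_comm (ψ _)]
      rfl

theorem integral_mul_norm_pow_succ_le [SFinite μ] (hψ0 : 0 ≤ ψ) (hψm : Measurable ψ)
    (hψ : Integrable ψ μ) (hψ1 : Integrable (fun w => ψ w * ‖w‖) μ) (hmass : ∫ w, ψ w ∂μ = 1)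
    (hmom : ∫ w, ψ w • w ∂μ = 0) {k : ℕ} (hk : Integrable (fun ξ => ψ ξ * ‖ξ‖ ^ k) μ)
    (hk1 : Integrable (fun ξ => ψ ξ * ‖ξ‖ ^ (k + 1)) μ) :
    ∫ ξ, ψ ξ * ‖ξ‖ ^ (k + 1) ∂μ ≤ ∫ ξ, ‖ξ‖ ^ k * (ψ ξ * collisionFreq μ ψ ξ) ∂μ := by
  refine integral_mono hk1 (integrable_norm_pow_mul_collisionFreq hψ0 hψm hψ hψ1 hk hk1)
    fun ξ => ?_
  calc ψ ξ * ‖ξ‖ ^ (k + 1) = ‖ξ‖ ^ k * (ψ ξ * ‖ξ‖) := by ring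
    _ ≤ ‖ξ‖ ^ k * (ψ ξ * collisionFreq μ ψ ξ) := by
      gcongr
      · exact hψ0 ξ
      · exact norm_le_collisionFreq hψ0 hψ hψ1 hmass hmom ξ

end NormedSpace

section InnerProductSpace

variable [InnerProductSpace ℝ E]

theorem integrable_mul_norm_sub_sq (hψ : Integrable ψ μ)
    (hψ1 : Integrable (fun w => ψ w * ‖w‖) μ) (hψ2 : Integrable (fun w => ψ w * ‖w‖ ^ 2) μ)
    (ξ : E) :
    Integrable (fun w => ψ w * ‖ξ - w‖ ^ 2) μ := by
  simp_rw [mul_norm_sub_sq_eq ψ ξ]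
  exact ((hψ.const_mul _).add hψ2).sub
    (((integrable_smul_self hψ.aestronglyMeasurable hψ1).const_inner ξ).const_mul 2)

variable [CompleteSpace E]

theorem integral_mul_norm_sub_sq (hψ : Integrable ψ μ)
    (hψ1 : Integrable (fun w => ψ w * ‖w‖) μ) (hψ2 : Integrable (fun w => ψ w * ‖w‖ ^ 2) μ)
    (hmass : ∫ w, ψ w ∂μ = 1) (hmom : ∫ w, ψ w • w ∂μ = 0) (ξ : E) :
    ∫ w, ψ w * ‖ξ - w‖ ^ 2 ∂μ = ‖ξ‖ ^ 2 + ∫ w, ψ w * ‖w‖ ^ 2 ∂μ := by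
  have hψv := integrable_smul_self hψ.aestronglyMeasurable hψ1
  have hsq : Integrable (fun w => ‖ξ‖ ^ 2 * ψ w + ψ w * ‖w‖ ^ 2) μ := (hψ.const_mul _).add hψ2
  simp_rw [mul_norm_sub_sq_eq ψ ξ]
  rw [integral_sub hsq ((hψv.const_inner ξ).const_mul 2),
    integral_add (hψ.const_mul _) hψ2, integral_const_mul, integral_const_mul, integral_inner hψv,
    hmass, hmom, inner_zero_right]
  ring

theorem collisionFreq_sq_le (hψ0 : 0 ≤ ψ) (hψ : Integrable ψ μ)
    (hψ1 : Integrable (fun w => ψ w * ‖w‖) μ) (hψ2 : Integrable (fun w => ψ w * ‖w‖ ^ 2) μ)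
    (hmass : ∫ w, ψ w ∂μ = 1) (hmom : ∫ w, ψ w • w ∂μ = 0) (ξ : E) :
    collisionFreq μ ψ ξ ^ 2 ≤ ‖ξ‖ ^ 2 + ∫ w, ψ w * ‖w‖ ^ 2 ∂μ := by
  have h := integral_le_sqrt_mul_sqrt_of_sq_le (F := fun w => ‖ξ - w‖ * ψ w) hψ0
    (fun w => mul_nonneg (hψ0 w) (sq_nonneg _)) hψ (integrable_mul_norm_sub_sq hψ hψ1 hψ2 ξ)
    (fun w => le_of_eq (by ring))
  rw [hmass, integral_mul_norm_sub_sq hψ hψ1 hψ2 hmass hmom, sqrt_one, one_mul] at h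
  refine (le_sqrt (collisionFreq_nonneg hψ0 ξ) ?_).1 h
  exact add_nonneg (sq_nonneg _) (integral_nonneg fun w => mul_nonneg (hψ0 w) (sq_nonneg _))

theorem integral_mul_collisionFreq_le_sqrt (hψ0 : 0 ≤ ψ) (hψ : Integrable ψ μ)
    (hψ1 : Integrable (fun w => ψ w * ‖w‖) μ) (hψ2 : Integrable (fun w => ψ w * ‖w‖ ^ 2) μ)
    (hmass : ∫ w, ψ w ∂μ = 1) (hmom : ∫ w, ψ w • w ∂μ = 0) :
    ∫ ξ, ψ ξ * collisionFreq μ ψ ξ ∂μ ≤ √(2 * ∫ w, ψ w * ‖w‖ ^ 2 ∂μ) := by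
  set m₂ := ∫ w, ψ w * ‖w‖ ^ 2 ∂μ
  have hm₂ : 0 ≤ m₂ := integral_nonneg fun w => mul_nonneg (hψ0 w) (sq_nonneg _)
  have h := integral_le_sqrt_mul_sqrt_of_sq_le (F := fun ξ => ψ ξ * collisionFreq μ ψ ξ)
    (g := fun ξ => ψ ξ * ‖ξ‖ ^ 2 + m₂ * ψ ξ) hψ0
    (fun ξ => add_nonneg (mul_nonneg (hψ0 ξ) (sq_nonneg _)) (mul_nonneg hm₂ (hψ0 ξ)))
    hψ (hψ2.add (hψ.const_mul m₂)) fun ξ => ?_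
  · rwa [integral_add hψ2 (hψ.const_mul m₂), integral_const_mul, hmass, sqrt_one, one_mul,
      mul_one, ← two_mul] at h
  calc (ψ ξ * collisionFreq μ ψ ξ) ^ 2 = ψ ξ * (ψ ξ * collisionFreq μ ψ ξ ^ 2) := by ring
    _ ≤ ψ ξ * (ψ ξ * (‖ξ‖ ^ 2 + m₂)) := by
      gcongr
      · exact hψ0 ξ
      · exact hψ0 ξ
      · exact collisionFreq_sq_le hψ0 hψ hψ1 hψ2 hmass hmom ξ
    _ = ψ ξ * (ψ ξ * ‖ξ‖ ^ 2 + m₂ * ψ ξ) := by ring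

end InnerProductSpace

end CollisionFrequency

theorem rpow_three_halves_le_of_sq_le_mul {e m₁ m₃ : ℝ} (he : 0 < e) (hm₁ : m₁ ≤ √e)
    (hm₃ : 0 ≤ m₃) (h : e ^ 2 ≤ m₁ * m₃) : e ^ ((3 : ℝ) / 2) ≤ m₃ := by
  have hs : 0 < √e := sqrt_pos.2 he
  rw [rpow_three_halves e he.le]
  refine le_of_mul_le_mul_left ?_ hs
  calc √e * (e * √e) = e ^ 2 := by rw [mul_left_comm, mul_self_sqrt he.le, sq]
    _ ≤ m₁ * m₃ := h
    _ ≤ √e * m₃ := mul_le_mul_of_nonneg_right hm₁ hm₃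

section Euclidean

variable {d : ℕ}

theorem one_le_jap (v : V d) : 1 ≤ jap v :=
  one_le_sqrt.2 (le_add_of_nonneg_right (sq_nonneg _))

theorem norm_le_jap (v : V d) : ‖v‖ ≤ jap v :=
  le_sqrt_of_sq_le (le_add_of_nonneg_left zero_le_one)

theorem Mmom_nonneg {ψ : V d → ℝ} (hψ0 : 0 ≤ ψ) (k : ℝ) : 0 ≤ Mmom k ψ :=
  integral_nonneg fun ξ => mul_nonneg (hψ0 ξ) (rpow_nonneg (norm_nonneg ξ) _)

theorem Mmom_div_two (ψ : V d → ℝ) (n : ℕ) : Mmom (n / 2) ψ = ∫ ξ, ψ ξ * ‖ξ‖ ^ n := by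
  simp only [Mmom, mul_div_cancel₀ (n : ℝ) two_ne_zero, Real.rpow_natCast]

theorem Mmom_one_half (ψ : V d → ℝ) : Mmom (1 / 2) ψ = ∫ ξ, ψ ξ * ‖ξ‖ := by
  simpa using Mmom_div_two ψ 1

theorem Mmom_three_halves (ψ : V d → ℝ) : Mmom (3 / 2) ψ = ∫ ξ, ψ ξ * ‖ξ‖ ^ 3 := by
  simpa using Mmom_div_two ψ 3

structure IsNormalizedDensity (ψ : V d → ℝ) : Prop where
  measurable : Measurable ψ
  nonneg : 0 ≤ ψ
  integrable_mul_jap_pow_three : Integrable fun ξ => ψ ξ * jap ξ ^ 3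
  integral_eq_one : ∫ ξ, ψ ξ = 1
  integral_smul_eq_zero : ∫ ξ, ψ ξ • ξ = 0
  integral_mul_norm_sq : ∫ ξ, ψ ξ * ‖ξ‖ ^ 2 = d / 2

namespace IsNormalizedDensity

variable {ψ : V d → ℝ}

theorem integrable_mul_norm_pow (hψ : IsNormalizedDensity ψ) {k : ℕ} (hk : k ≤ 3) :
    Integrable fun ξ => ψ ξ * ‖ξ‖ ^ k :=
  hψ.integrable_mul_jap_pow_three.mono
    (hψ.measurable.aestronglyMeasurable.mul (continuous_norm.pow k).aestronglyMeasurable)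
    (ae_of_all _ fun ξ => by
      simp only [norm_mul, norm_pow, Real.norm_eq_abs, abs_norm, abs_of_nonneg (hψ.nonneg ξ),
        abs_of_nonneg (zero_le_one.trans (one_le_jap ξ))]
      gcongr
      · exact hψ.nonneg ξ
      · exact (pow_le_pow_left₀ (norm_nonneg ξ) (norm_le_jap ξ) k).trans
          (pow_le_pow_right₀ (one_le_jap ξ) hk))

theorem integrable (hψ : IsNormalizedDensity ψ) : Integrable ψ := by
  simpa using hψ.integrable_mul_norm_pow (k := 0) (by norm_num)

theorem integrable_mul_norm (hψ : IsNormalizedDensity ψ) : Integrable fun ξ => ψ ξ * ‖ξ‖ := by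
  simpa using hψ.integrable_mul_norm_pow (k := 1) (by norm_num)

theorem Mmom_bounds (hψ : IsNormalizedDensity ψ) :
    Mmom (1 / 2) ψ ≤ √(d / 2) ∧ ((d : ℝ) / 2) ^ 2 ≤ Mmom (1 / 2) ψ * Mmom (3 / 2) ψ := by
  have hm₁ := Mmom_nonneg hψ.nonneg (1 / 2)
  have hm₃ := Mmom_nonneg hψ.nonneg (3 / 2)
  rw [Mmom_one_half] at hm₁ ⊢
  rw [Mmom_three_halves] at hm₃ ⊢
  constructor
  · have h := integral_le_sqrt_mul_sqrt_of_sq_le (F := fun ξ => ψ ξ * ‖ξ‖) hψ.nonneg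
      (fun ξ => mul_nonneg (hψ.nonneg ξ) (sq_nonneg _)) hψ.integrable
      (hψ.integrable_mul_norm_pow (by norm_num)) fun ξ => le_of_eq (by ring)
    rwa [hψ.integral_eq_one, hψ.integral_mul_norm_sq, sqrt_one, one_mul] at h
  · have h := integral_le_sqrt_mul_sqrt_of_sq_le (F := fun ξ => ψ ξ * ‖ξ‖ ^ 2)
      (f := fun ξ => ψ ξ * ‖ξ‖) (g := fun ξ => ψ ξ * ‖ξ‖ ^ 3)
      (fun ξ => mul_nonneg (hψ.nonneg ξ) (norm_nonneg _))
      (fun ξ => mul_nonneg (hψ.nonneg ξ) (by positivity)) hψ.integrable_mul_norm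
      (hψ.integrable_mul_norm_pow (by norm_num)) fun ξ => le_of_eq (by ring)
    rw [hψ.integral_mul_norm_sq, ← sqrt_mul hm₁] at h
    exact (le_sqrt (by positivity) (mul_nonneg hm₁ hm₃)).1 h

theorem aCoef_eq (ψ : V d → ℝ) : aCoef ψ = ∫ ξ, ψ ξ * collisionFreq volume ψ ξ := rfl

theorem bCoef_eq (ψ : V d → ℝ) :
    bCoef ψ = 2 / d * ∫ ξ, ‖ξ‖ ^ 2 * (ψ ξ * collisionFreq volume ψ ξ) := rfl

theorem aCoef_bounds (hψ : IsNormalizedDensity ψ) : Mmom (1 / 2) ψ ≤ aCoef ψ ∧ aCoef ψ ≤ √d := by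
  rw [aCoef_eq, Mmom_one_half]
  constructor
  · simpa using integral_mul_norm_pow_succ_le (k := 0) hψ.nonneg hψ.measurable hψ.integrable
      hψ.integrable_mul_norm hψ.integral_eq_one hψ.integral_smul_eq_zero
      (by simpa using hψ.integrable) (by simpa using hψ.integrable_mul_norm)
  · have h := integral_mul_collisionFreq_le_sqrt hψ.nonneg hψ.integrable hψ.integrable_mul_norm
      (hψ.integrable_mul_norm_pow (by norm_num)) hψ.integral_eq_one hψ.integral_smul_eq_zero
    rwa [hψ.integral_mul_norm_sq, mul_div_cancel₀ _ two_ne_zero] at h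

theorem bCoef_bounds (hψ : IsNormalizedDensity ψ) (hd : d ≠ 0) :
    2 / d * Mmom (3 / 2) ψ ≤ bCoef ψ ∧ bCoef ψ ≤ 2 / d * Mmom (3 / 2) ψ + Mmom (1 / 2) ψ := by
  rw [bCoef_eq, Mmom_three_halves, Mmom_one_half]
  have h2 := hψ.integrable_mul_norm_pow (k := 2) (by norm_num)
  have h3 := hψ.integrable_mul_norm_pow (k := 3) (by norm_num)
  constructor
  · exact mul_le_mul_of_nonneg_left (integral_mul_norm_pow_succ_le hψ.nonneg hψ.measurable
      hψ.integrable hψ.integrable_mul_norm hψ.integral_eq_one hψ.integral_smul_eq_zero h2 h3)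
      (by positivity)
  · have h := integral_norm_pow_mul_collisionFreq_le hψ.nonneg hψ.measurable hψ.integrable
      hψ.integrable_mul_norm h2 h3
    rw [hψ.integral_eq_one, hψ.integral_mul_norm_sq, one_mul] at h
    calc 2 / d * ∫ ξ, ‖ξ‖ ^ 2 * (ψ ξ * collisionFreq volume ψ ξ)
        ≤ 2 / d * ((∫ ξ, ψ ξ * ‖ξ‖ ^ 3) + (∫ ξ, ψ ξ * ‖ξ‖) * (d / 2)) := by gcongr
      _ = _ := by field_simp

end IsNormalizedDensity

end Euclidean

/-- **Elementary estimates on `a_ψ`, `b_ψ` and the moments** for a nonnegative distribution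
with unit mass, zero momentum and energy `d/2`. -/
theorem estimates_a_b_moments (d : ℕ) (hd : 3 ≤ d) (ψ : V d → ℝ)
    (hmeas : Measurable ψ) (hpos : ∀ ξ, 0 ≤ ψ ξ)
    (hint : Integrable (fun ξ : V d => ψ ξ * jap ξ ^ 3))
    (hmass : (∫ ξ : V d, ψ ξ) = 1)
    (hmom : (∫ ξ : V d, ψ ξ • ξ) = 0)
    (hen : (∫ ξ : V d, ψ ξ * ‖ξ‖ ^ 2) = (d : ℝ) / 2) :
    aCoef ψ ≤ Real.sqrt (2 * d) ∧
    (d : ℝ) ^ 2 / 4 * (Mmom (3 / 2) ψ)⁻¹ ≤ aCoef ψ ∧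
    Mmom (1 / 2) ψ ≤ Real.sqrt ((d : ℝ) / 2) ∧
    (d : ℝ) ^ 2 / 4 * (Mmom (3 / 2) ψ)⁻¹ ≤ Mmom (1 / 2) ψ ∧
    bCoef ψ ≤ 2 / (d : ℝ) * Mmom (3 / 2) ψ + Real.sqrt ((d : ℝ) / 2) ∧
    Real.sqrt ((d : ℝ) / 2) ≤ bCoef ψ ∧
    ((d : ℝ) / 2) ^ ((3 : ℝ) / 2) ≤ Mmom (3 / 2) ψ ∧
    aCoef ψ ≤ Real.sqrt d ∧
    Real.sqrt d ≤ Real.sqrt 2 * bCoef ψ := by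
  have hψ : IsNormalizedDensity ψ := ⟨hmeas, hpos, hint, hmass, hmom, hen⟩
  have hd₀ : (0 : ℝ) < d / 2 := div_pos (Nat.cast_pos.2 (by omega)) two_pos
  obtain ⟨hM₁, hM₁₃⟩ := hψ.Mmom_bounds
  obtain ⟨ha₁, ha₂⟩ := hψ.aCoef_bounds
  obtain ⟨hb₁, hb₂⟩ := hψ.bCoef_bounds (by omega)
  have hM₃ := rpow_three_halves_le_of_sq_le_mul hd₀ hM₁ (Mmom_nonneg hpos _) hM₁₃
  have hM₁' : (d : ℝ) ^ 2 / 4 * (Mmom (3 / 2) ψ)⁻¹ ≤ Mmom (1 / 2) ψ := by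
    rw [← div_eq_mul_inv, div_le_iff₀ ((rpow_pos_of_pos hd₀ _).trans_le hM₃)]
    linarith
  have hb : √(d / 2) ≤ bCoef ψ :=
    calc √(d / 2) = 2 / d * ((d / 2) ^ ((3 : ℝ) / 2)) := by
          rw [rpow_three_halves _ hd₀.le]
          field_simp
      _ ≤ 2 / d * Mmom (3 / 2) ψ := by gcongr
      _ ≤ bCoef ψ := hb₁
  have hsqrt : √d = √2 * √(d / 2) := by rw [← sqrt_mul zero_le_two]; ring_nf
  refine ⟨ha₂.trans (sqrt_le_sqrt (by linarith)), hM₁'.trans ha₁, hM₁, hM₁',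
    hb₂.trans (by linarith), hb, hM₃, ha₂, ?_⟩
  rw [hsqrt]
  gcongr
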